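/- arXiv:1012.4053 — 2 statements merged into one kernel-verified Lean document; each statement's English description precedes it below -/
import Mathlib

section
/- In the polynomial ring ℚ[t, p_1, p_2, p_3], let K be the ideal generated by the three quadratic elements 2p_1² - 2t·p_1 - p_1p_2, 2p_2² - 2t·p_2 - p_1p_2 - p_2p_3, and 2p_3² - 2t·p_3 - p_2p_3. Then the element 3p_1²p_2 - 6t·p_1p_2 - p_1p_2p_3 belongs to K. -/
open MvPolynomial

/-- In `ℚ[t, p₁, p₂, p₃]` (with `t = X 0`, `pᵢ = X i`), the cubic Monk relation
`3p₁²p₂ - 6t·p₁p₂ - p₁p₂p₃` lies in the ideal `K` generated by the three quadratic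
relations `2p₁² - 2t·p₁ - p₁p₂`, `2p₂² - 2t·p₂ - p₁p₂ - p₂p₃`, `2p₃² - 2t·p₃ - p₂p₃`. -/
theorem stmt11 :
    3 * (X 1 : MvPolynomial (Fin 4) ℚ) ^ 2 * X 2 - 6 * X 0 * X 1 * X 2 - X 1 * X 2 * X 3 ∈
      Ideal.span ({2 * X 1 ^ 2 - 2 * X 0 * X 1 - X 1 * X 2,
        2 * X 2 ^ 2 - 2 * X 0 * X 2 - X 1 * X 2 - X 2 * X 3,
        2 * X 3 ^ 2 - 2 * X 0 * X 3 - X 2 * X 3} : Set (MvPolynomial (Fin 4) ℚ)) := by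
  have h : (3 * (X 1 : MvPolynomial (Fin 4) ℚ) ^ 2 * X 2 - 6 * X 0 * X 1 * X 2 - X 1 * X 2 * X 3)
      = (2 * X 2) * (2 * X 1 ^ 2 - 2 * X 0 * X 1 - X 1 * X 2)
        + (X 1) * (2 * X 2 ^ 2 - 2 * X 0 * X 2 - X 1 * X 2 - X 2 * X 3) := by ring
  rw [h]
  exact add_mem
    (Ideal.mul_mem_left _ _ (Ideal.subset_span (by simp)))
    (Ideal.mul_mem_left _ _ (Ideal.subset_span (by simp)))
end

section
/- In the polynomial ring ℚ[t, p_1, p_2, p_3], let K be the ideal generated by 2p_1² - 2t·p_1 - p_1p_2, 2p_2² - 2t·p_2 - p_1p_2 - p_2p_3, and 2p_3² - 2t·p_3 - p_2p_3. Then all of the following elements belong to K: 3p_1p_2² - 6t·p_1p_2 - 2p_1p_2p_3; 2p_1²p_3 - 2t·p_1p_3 - p_1p_2p_3; 2p_1p_3² - 2t·p_1p_3 - p_1p_2p_3; 3p_2²p_3 - 6t·p_2p_3 - 2p_1p_2p_3; 3p_2p_3² - 6t·p_2p_3 - p_1p_2p_3; p_1²p_2p_3 - 3t·p_1p_2p_3;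 p_1p_2²p_3 - 4t·p_1p_2p_3; p_1p_2p_3² - 3t·p_1p_2p_3. -/
open MvPolynomial

/-- The ideal `K ⊆ ℚ[t, p₁, p₂, p₃]` (with `t = X 0`, `pᵢ = X i`) generated by the three
quadratic Monk relations. -/
noncomputable def K : Ideal (MvPolynomial (Fin 4) ℚ) :=
  Ideal.span {2 * X 1 ^ 2 - 2 * X 0 * X 1 - X 1 * X 2,
    2 * X 2 ^ 2 - 2 * X 0 * X 2 - X 1 * X 2 - X 2 * X 3,
    2 * X 3 ^ 2 - 2 * X 0 * X 3 - X 2 * X 3}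

/-- All the higher-degree Monk relations for the Peterson variety in `Flags(ℂ⁴)` belong to
the ideal `K` generated by the quadratic relations. -/
theorem stmt12 :
    (3 * (X 1 : MvPolynomial (Fin 4) ℚ) * X 2 ^ 2 - 6 * X 0 * X 1 * X 2
        - 2 * (X 1 * X 2 * X 3) ∈ K) ∧
    (2 * (X 1 : MvPolynomial (Fin 4) ℚ) ^ 2 * X 3 - 2 * X 0 * (X 1 * X 3)
        - X 1 * X 2 * X 3 ∈ K) ∧
    (2 * (X 1 : MvPolynomial (Fin 4) ℚ) * X 3 ^ 2 - 2 * X 0 * (X 1 * X 3)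
        - X 1 * X 2 * X 3 ∈ K) ∧
    (3 * (X 2 : MvPolynomial (Fin 4) ℚ) ^ 2 * X 3 - 6 * X 0 * (X 2 * X 3)
        - 2 * (X 1 * X 2 * X 3) ∈ K) ∧
    (3 * (X 2 : MvPolynomial (Fin 4) ℚ) * X 3 ^ 2 - 6 * X 0 * (X 2 * X 3)
        - X 1 * X 2 * X 3 ∈ K) ∧
    ((X 1 : MvPolynomial (Fin 4) ℚ) ^ 2 * X 2 * X 3
        - 3 * X 0 * (X 1 * X 2 * X 3) ∈ K) ∧
    ((X 1 : MvPolynomial (Fin 4) ℚ) * X 2 ^ 2 * X 3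
        - 4 * X 0 * (X 1 * X 2 * X 3) ∈ K) ∧
    ((X 1 : MvPolynomial (Fin 4) ℚ) * X 2 * X 3 ^ 2
        - 3 * X 0 * (X 1 * X 2 * X 3) ∈ K) := by
  have h1 : (2 * X 1 ^ 2 - 2 * X 0 * X 1 - X 1 * X 2 : MvPolynomial (Fin 4) ℚ) ∈ K :=
    Ideal.subset_span (by simp [K])
  have h2 : (2 * X 2 ^ 2 - 2 * X 0 * X 2 - X 1 * X 2 - X 2 * X 3 : MvPolynomial (Fin 4) ℚ) ∈ K :=
    Ideal.subset_span (by simp [K])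
  have h3 : (2 * X 3 ^ 2 - 2 * X 0 * X 3 - X 2 * X 3 : MvPolynomial (Fin 4) ℚ) ∈ K :=
    Ideal.subset_span (by simp [K])
  have comb : ∀ a b c : MvPolynomial (Fin 4) ℚ,
      a * (2 * X 1 ^ 2 - 2 * X 0 * X 1 - X 1 * X 2)
      + b * (2 * X 2 ^ 2 - 2 * X 0 * X 2 - X 1 * X 2 - X 2 * X 3)
      + c * (2 * X 3 ^ 2 - 2 * X 0 * X 3 - X 2 * X 3) ∈ K := fun a b c =>
    K.add_mem (K.add_mem (K.mul_mem_left a h1) (K.mul_mem_left b h2)) (K.mul_mem_left c h3)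
  have quarter : ∀ f : MvPolynomial (Fin 4) ℚ, 4 * f ∈ K → f ∈ K := by
    intro f hf
    have h := K.mul_mem_left (C (1/4 : ℚ)) hf
    rwa [show C (1/4 : ℚ) * (4 * f) = f by
      rw [← mul_assoc, ← map_ofNat (C : ℚ →+* MvPolynomial (Fin 4) ℚ) 4, ← C_mul]
      norm_num] at h
  refine ⟨?_, ?_, ?_, ?_, ?_, ?_, ?_, ?_⟩
  · have := comb (X 2) (2 * X 1) 0
    convert this using 1; ring
  · have := comb (X 3) 0 0
    convert this using 1; ring
  · have := comb 0 0 (X 1)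
    convert this using 1; ring
  · have := comb 0 (2 * X 3) (X 2)
    convert this using 1; ring
  · have := comb 0 (X 3) (2 * X 2)
    convert this using 1; ring
  · apply quarter
    have := comb (3 * X 2 * X 3) (2 * X 1 * X 3) (X 1 * X 2)
    convert this using 1; ring
  · apply quarter
    have := comb (2 * X 2 * X 3) (4 * (X 1 * X 3)) (2 * (X 1 * X 2))
    convert this using 1; ring
  · apply quarter
    have := comb (X 2 * X 3) (2 * (X 1 * X 3)) (3 * (X 1 * X 2))
    convert this using 1; ring
end
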